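/- For continuous functions y and μ on [0,1] with nondegenerate centered versions, the finite-dimensional shape index 1 − [Σ_j ỹ(t_j)μ̃(t_j)] / ([Σ_j ỹ(t_j)²]^{1/2}[Σ_j μ̃(t_j)²]^{1/2}) over k equidistant points converges, as k → ∞, to the shape index 1 − ⟨ỹ, μ̃⟩/(‖ỹ‖·‖μ̃‖). -/

import Mathlib

/-
The k-point index is a continuous function of three discrete covariances
(1/k) Σ ctrD f k j * ctrD g k j, since dividing the numerator and both variances by k leaves
it unchanged. Each such covariance equals avg (f g) - avg f * avg g, and the average over the
k equidistant points of [0, 1] is a left Riemann sum up to an O(1/k) endpoint term, so it tends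
to the integral; the limit is ∫ f g - ∫ f ∫ g = ⟨f̃, g̃⟩. The limiting variances are positive,
so the quotient passes to the limit.
-/

open MeasureTheory Real Filter

noncomputable def ctr (f : ℝ → ℝ) : ℝ → ℝ := fun t => f t - ∫ r in (0:ℝ)..1, f r

noncomputable def ip (f g : ℝ → ℝ) : ℝ := ∫ t in (0:ℝ)..1, f t * g t

noncomputable def nrm (f : ℝ → ℝ) : ℝ := Real.sqrt (∫ t in (0:ℝ)..1, (f t)^2)

noncomputable def IA (μ y : ℝ → ℝ) : ℝ := ip (ctr y) (ctr μ) / (nrm (ctr μ))^2 - 1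

noncomputable def IS (μ y : ℝ → ℝ) : ℝ := 1 - ip (ctr y) (ctr μ) / (nrm (ctr y) * nrm (ctr μ))

noncomputable def betaC (μ y : ℝ → ℝ) : ℝ := ip (ctr y) (ctr μ) / (nrm (ctr μ))^2

noncomputable def IM (μ y : ℝ → ℝ) : ℝ :=
  (∫ t in (0:ℝ)..1, y t) - betaC μ y * ∫ t in (0:ℝ)..1, μ t

def memL2 (f : ℝ → ℝ) : Prop :=
  MeasureTheory.MemLp f 2 (MeasureTheory.volume.restrict (Set.Icc (0:ℝ) 1))

noncomputable def pts (k j : ℕ) : ℝ := (j : ℝ) / ((k : ℝ) - 1)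

noncomputable def avgD (f : ℝ → ℝ) (k : ℕ) : ℝ := (∑ j ∈ Finset.range k, f (pts k j)) / k

noncomputable def ctrD (f : ℝ → ℝ) (k : ℕ) (j : ℕ) : ℝ := f (pts k j) - avgD f k

open Set Finset Topology

section RiemannSum

variable {f : ℝ → ℝ} {a b : ℝ}

lemma abs_riemannSum_sub_integral_le (hab : a ≤ b) (hf : ContinuousOn f (Icc a b))
    {n : ℕ} (hn : n ≠ 0) {ε : ℝ}
    (hε : ∀ s ∈ Icc a b, ∀ t ∈ Icc a b, dist s t ≤ (b - a) / n → dist (f s) (f t) ≤ ε) :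
    |(b - a) / n * ∑ j ∈ range n, f (a + j * ((b - a) / n)) - ∫ t in a..b, f t|
      ≤ ε * (b - a) := by
  set h := (b - a) / n with h_def
  set x : ℕ → ℝ := fun j => a + j * h
  have hh : 0 ≤ h := div_nonneg (sub_nonneg.2 hab) n.cast_nonneg
  have hstep (j : ℕ) : x (j + 1) - x j = h := by simp only [x]; push_cast; ring
  have hx_le (j : ℕ) : x j ≤ x (j + 1) := by linarith [hstep j]
  have hxn : x n = b := by simp only [x, h_def]; field_simp; ring
  have hx_mem {j : ℕ} (hj : j ≤ n) : x j ∈ Icc a b := by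
    refine ⟨le_add_of_nonneg_right (by positivity), hxn ▸ ?_⟩
    simp only [x]
    gcongr
  have hcell {j : ℕ} (hj : j < n) : Icc (x j) (x (j + 1)) ⊆ Icc a b :=
    Icc_subset_Icc (hx_mem hj.le).1 (hx_mem hj).2
  have hint {j : ℕ} (hj : j < n) : IntervalIntegrable f volume (x j) (x (j + 1)) :=
    (hf.mono (hcell hj)).intervalIntegrable_of_Icc (hx_le j)
  have hsplit : ∫ t in a..b, f t = ∑ j ∈ range n, ∫ t in x j..x (j + 1), f t := by
    rw [intervalIntegral.sum_integral_adjacent_intervals (a := x) fun j hj => hint hj, hxn]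
    simp [x]
  have hsum : h * ∑ j ∈ range n, f (x j) = ∑ j ∈ range n, ∫ _ in x j..x (j + 1), f (x j) := by
    simp only [mul_sum, intervalIntegral.integral_const, hstep, smul_eq_mul]
  have hcell_le {j : ℕ} (hj : j < n) :
      |∫ t in x j..x (j + 1), (f (x j) - f t)| ≤ ε * h := by
    have := intervalIntegral.norm_integral_le_of_norm_le_const (a := x j) (b := x (j + 1))
      (C := ε) (f := fun t => f (x j) - f t) fun t ht => by
        rw [uIoc_of_le (hx_le j)] at ht
        have ht' : t ∈ Icc a b := hcell hj (Ioc_subset_Icc_self ht)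
        refine hε _ (hx_mem hj.le) _ ht' ?_
        rw [dist_comm, Real.dist_eq, abs_of_nonneg (by linarith [ht.1])]
        linarith [hstep j, ht.2]
    rwa [hstep, abs_of_nonneg hh] at this
  calc |h * ∑ j ∈ range n, f (x j) - ∫ t in a..b, f t|
      = |∑ j ∈ range n, ∫ t in x j..x (j + 1), (f (x j) - f t)| := by
        rw [hsum, hsplit, ← sum_sub_distrib]
        congr 1
        refine sum_congr rfl fun j hj => ?_
        rw [intervalIntegral.integral_sub intervalIntegrable_const (hint (mem_range.1 hj))]
    _ ≤ ∑ j ∈ range n, |∫ t in x j..x (j + 1), (f (x j) - f t)| := abs_sum_le_sum_abs _ _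
    _ ≤ ∑ _j ∈ range n, ε * h := sum_le_sum fun j hj => hcell_le (mem_range.1 hj)
    _ = ε * (b - a) := by simp only [sum_const, card_range, nsmul_eq_mul, h_def]; field_simp

theorem tendsto_riemannSum_integral (hab : a ≤ b) (hf : ContinuousOn f (Icc a b)) :
    Tendsto (fun n : ℕ => (b - a) / n * ∑ j ∈ range n, f (a + j * ((b - a) / n))) atTop
      (𝓝 (∫ t in a..b, f t)) := by
  refine Metric.tendsto_nhds.2 fun ε hε => ?_
  have hε' : 0 < ε / (b - a + 1) := div_pos hε (by linarith)
  obtain ⟨δ, hδ, hfδ⟩ := Metric.uniformContinuousOn_iff_le.1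
    (isCompact_Icc.uniformContinuousOn_of_continuous hf) _ hε'
  filter_upwards [(tendsto_const_div_atTop_nhds_zero_nat (b - a)).eventually (ge_mem_nhds hδ),
    eventually_ne_atTop 0] with n hnδ hn
  refine (abs_riemannSum_sub_integral_le hab hf hn
    fun s hs t ht hst => hfδ s hs t ht (hst.trans hnδ)).trans_lt ?_
  rw [div_mul_eq_mul_div, div_lt_iff₀ (by linarith)]
  nlinarith

end RiemannSum

theorem tendsto_avgD {f : ℝ → ℝ} (hf : ContinuousOn f (Icc 0 1)) :
    Tendsto (avgD f) atTop (𝓝 (∫ t in (0:ℝ)..1, f t)) := by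
  rw [← tendsto_add_atTop_iff_nat 1]
  have hlim := ((tendsto_natCast_div_add_atTop (1 : ℝ)).mul
    (tendsto_riemannSum_integral zero_le_one hf)).add
      (tendsto_one_div_add_atTop_nhds_zero_nat.mul_const (f 1))
  simp only [one_mul, zero_mul, add_zero, sub_zero, zero_add] at hlim
  refine hlim.congr' ?_
  filter_upwards [eventually_ne_atTop 0] with n hn
  -- the `n + 1` points are `j / n` for `j ≤ n`: a left Riemann sum of mesh `1 / n` plus `f 1`
  have hpts (j : ℕ) : pts (n + 1) j = j * (1 / n) := by
    simp only [pts]; push_cast; ring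
  have hlast : pts (n + 1) n = 1 := by rw [hpts]; field_simp
  rw [avgD, sum_range_succ, hlast]
  simp only [hpts]
  push_cast
  field_simp

lemma sum_sub_mean_mul_sub_mean {ι : Type*} (s : Finset ι) (u v : ι → ℝ) :
    (∑ i ∈ s, (u i - (∑ i ∈ s, u i) / #s) * (v i - (∑ i ∈ s, v i) / #s)) / #s
      = (∑ i ∈ s, u i * v i) / #s - (∑ i ∈ s, u i) / #s * ((∑ i ∈ s, v i) / #s) := by
  rcases s.eq_empty_or_nonempty with rfl | hs
  · simp
  have hs : (#s : ℝ) ≠ 0 := by exact_mod_cast hs.card_pos.ne'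
  simp only [sub_mul, mul_sub, sum_sub_distrib, ← sum_mul, ← mul_sum, sum_const, nsmul_eq_mul]
  field_simp
  ring

lemma sum_ctrD_mul_div (f g : ℝ → ℝ) (k : ℕ) :
    (∑ j ∈ range k, ctrD f k j * ctrD g k j) / k
      = avgD (fun t => f t * g t) k - avgD f k * avgD g k := by
  simpa [ctrD, avgD] using sum_sub_mean_mul_sub_mean (range k) (f ∘ pts k) (g ∘ pts k)

lemma ip_ctr {f g : ℝ → ℝ} (hf : IntervalIntegrable f volume 0 1)
    (hg : IntervalIntegrable g volume 0 1)
    (hfg : IntervalIntegrable (fun t => f t * g t) volume 0 1) :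
    ip (ctr f) (ctr g) = (∫ t in (0:ℝ)..1, f t * g t)
      - (∫ t in (0:ℝ)..1, f t) * (∫ t in (0:ℝ)..1, g t) := by
  unfold ip ctr
  set F := ∫ t in (0:ℝ)..1, f t
  set G := ∫ t in (0:ℝ)..1, g t
  have hexpand (t : ℝ) : (f t - F) * (g t - G) = f t * g t - G * f t - F * g t + F * G := by ring
  simp only [hexpand]
  rw [intervalIntegral.integral_add (((hfg.sub (hf.const_mul G)).sub (hg.const_mul F)))
      intervalIntegrable_const,
    intervalIntegral.integral_sub (hfg.sub (hf.const_mul G)) (hg.const_mul F),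
    intervalIntegral.integral_sub hfg (hf.const_mul G),
    intervalIntegral.integral_const_mul, intervalIntegral.integral_const_mul,
    intervalIntegral.integral_const]
  simp only [smul_eq_mul]
  ring

theorem tendsto_sum_ctrD_mul_div {f g : ℝ → ℝ} (hf : ContinuousOn f (Icc 0 1))
    (hg : ContinuousOn g (Icc 0 1)) :
    Tendsto (fun k : ℕ => (∑ j ∈ range k, ctrD f k j * ctrD g k j) / k) atTop
      (𝓝 (ip (ctr f) (ctr g))) := by
  simp only [sum_ctrD_mul_div]
  rw [ip_ctr (hf.intervalIntegrable_of_Icc zero_le_one) (hg.intervalIntegrable_of_Icc zero_le_one)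
    ((hf.mul hg).intervalIntegrable_of_Icc zero_le_one)]
  exact (tendsto_avgD (hf.mul hg)).sub ((tendsto_avgD hf).mul (tendsto_avgD hg))

lemma div_div_sqrt_div_mul_sqrt_div (a b d : ℝ) {c : ℝ} (hc : 0 < c) :
    a / c / (√(b / c) * √(d / c)) = a / (√b * √d) := by
  rw [sqrt_div' _ hc.le, sqrt_div' _ hc.le, div_mul_div_comm, mul_self_sqrt hc.le,
    div_div_div_cancel_right₀ hc.ne']

theorem shape_index_riemann_convergence (μ y : ℝ → ℝ)
    (hy : ContinuousOn y (Set.Icc (0:ℝ) 1)) (hμ : ContinuousOn μ (Set.Icc (0:ℝ) 1))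
    (hyn : 0 < ∫ t in (0:ℝ)..1, (ctr y t)^2)
    (hμn : 0 < ∫ t in (0:ℝ)..1, (ctr μ t)^2) :
    Tendsto (fun k => 1 - (∑ j ∈ Finset.range k, ctrD y k j * ctrD μ k j) /
        (Real.sqrt (∑ j ∈ Finset.range k, (ctrD y k j)^2) *
          Real.sqrt (∑ j ∈ Finset.range k, (ctrD μ k j)^2)))
      atTop (nhds (IS μ y)) := by
  simp only [IS, nrm, sq] at hyn hμn ⊢
  have hcos := (tendsto_sum_ctrD_mul_div hy hμ).div
    ((tendsto_sum_ctrD_mul_div hy hy).sqrt.mul (tendsto_sum_ctrD_mul_div hμ hμ).sqrt)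
    (mul_pos (sqrt_pos.2 hyn) (sqrt_pos.2 hμn)).ne'
  refine (hcos.const_sub 1).congr' ?_
  filter_upwards [eventually_ne_atTop 0] with k hk
  rw [Pi.div_apply, div_div_sqrt_div_mul_sqrt_div _ _ _ (by positivity)]
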